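/- Monotonicity of the Opinion-Dependent Reproduction Number: for opinion vectors o(t₀), o(t₁) ∈ [−0.5, 0.5]^n, if o(t₀) ≤ o(t₁) entrywise, then R^o_{t₀} ≥ R^o_{t₁}, where R^o_t = ρ(D(o(t))^{−1} B(o(t))) is the spectral radius of D(o(t))^{−1} B(o(t)); conversely, if o(t₀) ≥ o(t₁) entrywise, then R^o_{t₀} ≤ R^o_{t₁}. -/

import Mathlib

open Matrix Filter Set

noncomputable section

/-- The modified sign function: `1` if `0 ≤ x`, `-1` otherwise. -/
def sgnm (x : ℝ) : ℝ := if 0 ≤ x then 1 else -1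

/-- Gauge transformation matrix `Φ(o) = diag(sgnm o₁, …, sgnm oₙ)`. -/
def gaugeMat {n : ℕ} (o : Fin n → ℝ) : Matrix (Fin n) (Fin n) ℝ :=
  Matrix.diagonal fun i => sgnm (o i)

/-- Graph Laplacian of a nonnegative adjacency matrix with zero diagonal. -/
def lapOf {n : ℕ} (A : Matrix (Fin n) (Fin n) ℝ) : Matrix (Fin n) (Fin n) ℝ :=
  Matrix.diagonal (fun i => ∑ j, A i j) - A

/-- Irreducibility of a (nonnegative) matrix: between any two indices some power
has a strictly positive entry. -/
def MatIrreducible {n : ℕ} (M : Matrix (Fin n) (Fin n) ℝ) : Prop :=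
  ∀ i j : Fin n, ∃ k : ℕ, 1 ≤ k ∧ 0 < (M ^ k) i j

/-- Spectral radius of a real square matrix, as the largest modulus of a complex
eigenvalue. -/
def specRad {m : Type*} [Fintype m] [DecidableEq m] (A : Matrix m m ℝ) : ℝ :=
  sSup ((fun z => ‖z‖) '' spectrum ℂ (A.map (algebraMap ℝ ℂ)))

/-- Spectral abscissa of a real square matrix, as the largest real part of a
complex eigenvalue. -/
def specAbs {m : Type*} [Fintype m] [DecidableEq m] (A : Matrix m m ℝ) : ℝ :=
  sSup (Complex.re '' spectrum ℂ (A.map (algebraMap ℝ ℂ)))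

/-- A real square matrix is Hurwitz if all its (complex) eigenvalues have
negative real part. -/
def IsHurwitz {m : Type*} [Fintype m] [DecidableEq m] (A : Matrix m m ℝ) : Prop :=
  ∀ z ∈ spectrum ℂ (A.map (algebraMap ℝ ℂ)), z.re < 0

/-- The data of the coupled networked SIS epidemic–opinion model over `n`
communities. -/
structure EpiOpModel (n : ℕ) where
  /-- healing rates -/
  δ : Fin n → ℝ
  /-- minimum healing rate -/
  δmin : ℝ
  /-- minimum infection rate -/
  βmin : ℝ
  /-- unweighted adjacency matrix `Ã` of the (strongly connected) epidemic graph -/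
  Atil : Matrix (Fin n) (Fin n) ℝ
  /-- infection matrix `B = [β_ij]` -/
  B : Matrix (Fin n) (Fin n) ℝ
  /-- nonnegative adjacency matrix `Ā_u` of the (strongly connected) opinion graph -/
  Au : Matrix (Fin n) (Fin n) ℝ
  δmin_pos : 0 < δmin
  δ_ge : ∀ i, δmin ≤ δ i
  βmin_pos : 0 < βmin
  Atil_01 : ∀ i j, Atil i j = 0 ∨ Atil i j = 1
  Atil_diag : ∀ i, Atil i i = 0
  B_edge : ∀ i j, Atil i j = 1 → βmin ≤ B i j
  B_off : ∀ i j, Atil i j = 0 → B i j = 0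
  B_irred : MatIrreducible B
  Au_nonneg : ∀ i j, 0 ≤ Au i j
  Au_diag : ∀ i, Au i i = 0
  Au_irred : MatIrreducible Au

namespace EpiOpModel

/-- The state space `[0,1]^n × [−0.5, 0.5]^n`. -/
def InBox {n : ℕ} (_M : EpiOpModel n) (x o : Fin n → ℝ) : Prop :=
  (∀ i, x i ∈ Set.Icc (0:ℝ) 1) ∧ (∀ i, o i ∈ Set.Icc (-(1/2) : ℝ) (1/2))

variable {n : ℕ} (M : EpiOpModel n)

/-- `B_min = β_min Ã`. -/
def Bmin : Matrix (Fin n) (Fin n) ℝ := M.βmin • M.Atil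

/-- `D = diag(δ₁, …, δₙ)`. -/
def Dmax : Matrix (Fin n) (Fin n) ℝ := Matrix.diagonal M.δ

/-- `D_min = δ_min I`. -/
def Dmin : Matrix (Fin n) (Fin n) ℝ := M.δmin • (1 : Matrix (Fin n) (Fin n) ℝ)

/-- Opinion-dependent healing matrix `D(o) = D_min + (D − D_min)(O + 0.5 I)`. -/
def Dmat (o : Fin n → ℝ) : Matrix (Fin n) (Fin n) ℝ :=
  Matrix.diagonal fun i => M.δmin + (M.δ i - M.δmin) * (o i + 1/2)

/-- Opinion-dependent infection matrix `B(o) = B − (O + 0.5 I)(B − B_min)`. -/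
def Bmat (o : Fin n → ℝ) : Matrix (Fin n) (Fin n) ℝ :=
  Matrix.of fun i j => M.B i j - (o i + 1/2) * (M.B i j - M.Bmin i j)

/-- Laplacian `L̄_u` of the opinion adjacency matrix. -/
def Lu : Matrix (Fin n) (Fin n) ℝ := lapOf M.Au

/-- Signed opinion Laplacian `Φ(o) L̄_u Φ(o)`. -/
def Lsgn (o : Fin n → ℝ) : Matrix (Fin n) (Fin n) ℝ :=
  gaugeMat o * M.Lu * gaugeMat o

/-- Epidemic vector field `ẋ = −D(o)x + (I − X)B(o)x`. -/
def fx (x o : Fin n → ℝ) : Fin n → ℝ :=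
  -(M.Dmat o).mulVec x +
    (Matrix.diagonal fun i => 1 - x i).mulVec ((M.Bmat o).mulVec x)

/-- Opinion vector field `ȯ = x − (Φ(o) L̄_u Φ(o) + I) o − 0.5 e`. -/
def fo (x o : Fin n → ℝ) : Fin n → ℝ :=
  x - (M.Lsgn o + 1).mulVec o - (fun _ => (1/2 : ℝ))

/-- Equilibria of the coupled system. -/
def IsEquilibrium (x o : Fin n → ℝ) : Prop := M.fx x o = 0 ∧ M.fo x o = 0

/-- Trajectories (solutions) of the coupled system. -/
def IsTrajectory (x o : ℝ → Fin n → ℝ) : Prop :=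
  ∀ t : ℝ, ∀ i : Fin n,
    HasDerivAt (fun s => x s i) (M.fx (x t) (o t) i) t ∧
    HasDerivAt (fun s => o s i) (M.fo (x t) (o t) i) t

/-- The Opinion-Dependent Reproduction Number `R^o = ρ(D(o)⁻¹ B(o))`. -/
def Rnum (o : Fin n → ℝ) : ℝ := specRad ((M.Dmat o)⁻¹ * M.Bmat o)

/-- `R_max = ρ(D_min⁻¹ B)`. -/
def Rmax : ℝ := specRad (M.Dmin⁻¹ * M.B)

/-- `R_min = ρ(D⁻¹ B_min)`. -/
def Rmin : ℝ := specRad (M.Dmax⁻¹ * M.Bmin)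

/-- `W(o) = −D(o) + B(o)`. -/
def Wmat (o : Fin n → ℝ) : Matrix (Fin n) (Fin n) ℝ := -(M.Dmat o) + M.Bmat o

/-- Jacobian matrix of the coupled system evaluated at a healthy equilibrium
`(0, o)`: block lower triangular with diagonal blocks `W(o)` and
`−(Φ(o) L̄_u Φ(o) + I)`. -/
def JacHealthy (o : Fin n → ℝ) : Matrix (Fin n ⊕ Fin n) (Fin n ⊕ Fin n) ℝ :=
  Matrix.fromBlocks (M.Wmat o) 0 1 (-(M.Lsgn o + 1))

/-- Lyapunov stability of an equilibrium of the coupled system. -/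
def LyapunovStable (xe oe : Fin n → ℝ) : Prop :=
  ∀ ε > 0, ∃ δ > 0, ∀ x o : ℝ → Fin n → ℝ, M.IsTrajectory x o →
    dist (x 0, o 0) (xe, oe) < δ → ∀ t ≥ 0, dist (x t, o t) (xe, oe) < ε

/-- Local exponential stability of an equilibrium of the coupled system. -/
def LocExpStable (xe oe : Fin n → ℝ) : Prop :=
  ∃ δ > 0, ∃ C > 0, ∃ α > 0, ∀ x o : ℝ → Fin n → ℝ, M.IsTrajectory x o →
    dist (x 0, o 0) (xe, oe) < δ →
    ∀ t ≥ 0, dist (x t, o t) (xe, oe) ≤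
      C * Real.exp (-α * t) * dist (x 0, o 0) (xe, oe)

end EpiOpModel

/-! Entrywise, `(D(o)⁻¹ B(o))ᵢⱼ = B(o)ᵢⱼ / D(o)ᵢᵢ`. Raising the opinions increases every healing
rate `D(o)ᵢᵢ > 0` and decreases every infection rate `B(o)ᵢⱼ ≥ 0`, so the nonnegative matrix
`D(o)⁻¹ B(o)` decreases entrywise. The spectral radius is monotone for the entrywise order on
nonnegative matrices: `0 ≤ A ≤ B` gives `‖Aᵏ‖∞ ≤ ‖Bᵏ‖∞` for all `k`, and Gelfand's formula
passes this to the limit. -/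

open scoped NNReal ENNReal

section SpectralRadius

open scoped Matrix.Norms.Operator

variable {m : Type*} [Fintype m]

theorem Matrix.linfty_opNNNorm_map_le_of_nonneg {A B : Matrix m m ℝ} (hA : ∀ i j, 0 ≤ A i j)
    (hAB : ∀ i j, A i j ≤ B i j) :
    ‖A.map (algebraMap ℝ ℂ)‖₊ ≤ ‖B.map (algebraMap ℝ ℂ)‖₊ := by
  simp only [Matrix.linfty_opNNNorm_def, Matrix.map_apply]
  refine Finset.sup_mono_fun fun i _ => Finset.sum_le_sum fun j _ => ?_
  rw [← NNReal.coe_le_coe]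
  simpa [abs_of_nonneg (hA i j), abs_of_nonneg ((hA i j).trans (hAB i j))] using hAB i j

variable [DecidableEq m]

theorem Matrix.pow_apply_le_pow_apply_of_nonneg {α : Type*} [Semiring α] [PartialOrder α]
    [IsOrderedRing α] {A B : Matrix m m α} (hA : ∀ i j, 0 ≤ A i j)
    (hAB : ∀ i j, A i j ≤ B i j) (k : ℕ) (i j : m) : (A ^ k) i j ≤ (B ^ k) i j := by
  induction k generalizing j with
  | zero => rfl
  | succ k ih =>
    rw [pow_succ, pow_succ, Matrix.mul_apply, Matrix.mul_apply]
    exact Finset.sum_le_sum fun l _ => mul_le_mul (ih l) (hAB l j) (hA l j)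
      ((Matrix.pow_apply_nonneg hA k i l).trans (ih l))

theorem specRad_nonneg (A : Matrix m m ℝ) : 0 ≤ specRad A :=
  Real.sSup_nonneg <| by rintro _ ⟨z, -, rfl⟩; exact norm_nonneg z

theorem norm_le_specRad_of_mem {A : Matrix m m ℝ} {z : ℂ}
    (hz : z ∈ spectrum ℂ (A.map (algebraMap ℝ ℂ))) : ‖z‖ ≤ specRad A :=
  le_csSup ((spectrum.isCompact _).image continuous_norm).bddAbove ⟨z, hz, rfl⟩

theorem Matrix.spectralRadius_map_le_of_nonneg [Nonempty m] {A B : Matrix m m ℝ}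
    (hA : ∀ i j, 0 ≤ A i j) (hAB : ∀ i j, A i j ≤ B i j) :
    spectralRadius ℂ (A.map (algebraMap ℝ ℂ)) ≤ spectralRadius ℂ (B.map (algebraMap ℝ ℂ)) := by
  have hgelfand := (spectrum.pow_nnnorm_pow_one_div_tendsto_nhds_spectralRadius
    (B.map (algebraMap ℝ ℂ))).comp (tendsto_add_atTop_nat 1)
  refine ge_of_tendsto' hgelfand fun k => ?_
  have hpow : ∀ C : Matrix m m ℝ, C.map (algebraMap ℝ ℂ) ^ (k + 1) =
      (C ^ (k + 1)).map (algebraMap ℝ ℂ) := fun C =>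
    ((algebraMap ℝ ℂ).mapMatrix.map_pow C (k + 1)).symm
  calc spectralRadius ℂ (A.map (algebraMap ℝ ℂ))
      ≤ (‖A.map (algebraMap ℝ ℂ) ^ (k + 1)‖₊ : ℝ≥0∞) ^ (1 / (k + 1) : ℝ) := by
        simpa using spectrum.spectralRadius_le_pow_nnnorm_pow_one_div ℂ
          (A.map (algebraMap ℝ ℂ)) k
    _ ≤ (‖B.map (algebraMap ℝ ℂ) ^ (k + 1)‖₊ : ℝ≥0∞) ^ (1 / (k + 1) : ℝ) := by
        rw [hpow, hpow]
        gcongr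
        exact Matrix.linfty_opNNNorm_map_le_of_nonneg (Matrix.pow_apply_nonneg hA _)
          (Matrix.pow_apply_le_pow_apply_of_nonneg hA hAB _)
    _ = _ := by simp

theorem specRad_le_specRad_of_nonneg_of_le {A B : Matrix m m ℝ} (hA : ∀ i j, 0 ≤ A i j)
    (hAB : ∀ i j, A i j ≤ B i j) : specRad A ≤ specRad B := by
  refine Real.sSup_le ?_ (specRad_nonneg B)
  rintro _ ⟨z, hz, rfl⟩
  cases isEmpty_or_nonempty m
  · simp [spectrum.of_subsingleton] at hz
  obtain ⟨w, hw, hw_eq⟩ := spectrum.exists_nnnorm_eq_spectralRadius (B.map (algebraMap ℝ ℂ))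
  have hzw : (‖z‖₊ : ℝ≥0∞) ≤ ‖w‖₊ :=
    calc (‖z‖₊ : ℝ≥0∞) ≤ spectralRadius ℂ (A.map (algebraMap ℝ ℂ)) := le_iSup₂ (α := ℝ≥0∞) z hz
      _ ≤ spectralRadius ℂ (B.map (algebraMap ℝ ℂ)) :=
        Matrix.spectralRadius_map_le_of_nonneg hA hAB
      _ = ‖w‖₊ := hw_eq.symm
  exact (show ‖z‖ ≤ ‖w‖ by exact_mod_cast hzw).trans (norm_le_specRad_of_mem hw)

end SpectralRadius

theorem Matrix.inv_diagonal_mul_apply {m K : Type*} [Fintype m] [DecidableEq m] [Field K]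
    {v : m → K} (hv : ∀ i, v i ≠ 0) (A : Matrix m m K) (i j : m) :
    ((Matrix.diagonal v)⁻¹ * A) i j = (v i)⁻¹ * A i j := by
  have hv' : IsUnit v := Pi.isUnit_iff.mpr fun i => (hv i).isUnit
  have hinv : Ring.inverse v i = (v i)⁻¹ :=
    eq_inv_of_mul_eq_one_left (congrFun (Ring.inverse_mul_cancel v hv') i)
  rw [Matrix.inv_diagonal, Matrix.diagonal_mul, hinv]

namespace EpiOpModel

variable {n : ℕ} (M : EpiOpModel n) {o o₀ o₁ : Fin n → ℝ}

theorem Bmin_apply_nonneg (i j : Fin n) : 0 ≤ M.Bmin i j := by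
  rcases M.Atil_01 i j with h | h <;> simp [Bmin, h, M.βmin_pos.le]

theorem Bmin_apply_le (i j : Fin n) : M.Bmin i j ≤ M.B i j := by
  rcases M.Atil_01 i j with h | h
  · simp [Bmin, h, M.B_off i j h]
  · simpa [Bmin, h] using M.B_edge i j h

theorem Bmat_apply_nonneg {i : Fin n} (ho : o i ≤ 1/2) (j : Fin n) : 0 ≤ M.Bmat o i j := by
  have := M.Bmin_apply_nonneg i j
  have := M.Bmin_apply_le i j
  simp only [Bmat, Matrix.of_apply]
  nlinarith

theorem Bmat_apply_antitone {i : Fin n} (h : o₀ i ≤ o₁ i) (j : Fin n) :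
    M.Bmat o₁ i j ≤ M.Bmat o₀ i j := by
  have := M.Bmin_apply_le i j
  simp only [Bmat, Matrix.of_apply]
  nlinarith

theorem Dmat_apply_self_pos {i : Fin n} (ho : -(1/2) ≤ o i) : 0 < M.Dmat o i i := by
  have := M.δ_ge i
  have := M.δmin_pos
  simp only [Dmat, Matrix.diagonal_apply_eq]
  nlinarith

theorem Dmat_apply_self_mono {i : Fin n} (h : o₀ i ≤ o₁ i) : M.Dmat o₀ i i ≤ M.Dmat o₁ i i := by
  have := M.δ_ge i
  simp only [Dmat, Matrix.diagonal_apply_eq]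
  nlinarith

theorem Dmat_inv_mul_Bmat_apply (ho : ∀ i, -(1/2) ≤ o i) (i j : Fin n) :
    ((M.Dmat o)⁻¹ * M.Bmat o) i j = (M.Dmat o i i)⁻¹ * M.Bmat o i j := by
  have hD := Matrix.inv_diagonal_mul_apply (fun i => (M.Dmat_apply_self_pos (ho i)).ne')
    (M.Bmat o) i j
  simpa only [Dmat, Matrix.diagonal_apply_eq] using hD

theorem Rnum_le_Rnum_of_le (ho₀ : ∀ i, -(1/2) ≤ o₀ i) (ho₁ : ∀ i, o₁ i ≤ 1/2)
    (h : ∀ i, o₀ i ≤ o₁ i) : M.Rnum o₁ ≤ M.Rnum o₀ := by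
  have ho₁' : ∀ i, -(1/2) ≤ o₁ i := fun i => (ho₀ i).trans (h i)
  refine specRad_le_specRad_of_nonneg_of_le (fun i j => ?_) (fun i j => ?_)
  · rw [M.Dmat_inv_mul_Bmat_apply ho₁']
    exact mul_nonneg (inv_nonneg.mpr (M.Dmat_apply_self_pos (ho₁' i)).le)
      (M.Bmat_apply_nonneg (ho₁ i) j)
  · rw [M.Dmat_inv_mul_Bmat_apply ho₀, M.Dmat_inv_mul_Bmat_apply ho₁']
    exact mul_le_mul
      (inv_anti₀ (M.Dmat_apply_self_pos (ho₀ i)) (M.Dmat_apply_self_mono (h i)))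
      (M.Bmat_apply_antitone (h i) j) (M.Bmat_apply_nonneg (ho₁ i) j)
      (inv_nonneg.mpr (M.Dmat_apply_self_pos (ho₀ i)).le)

end EpiOpModel

/-- Proposition 1, part 1, monotonicity of the Opinion-Dependent
Reproduction Number: if `o(t₀) ≤ o(t₁)` entrywise then `R^o_{t₀} ≥ R^o_{t₁}`,
and conversely if `o(t₀) ≥ o(t₁)` entrywise then `R^o_{t₀} ≤ R^o_{t₁}`. -/
theorem Rnum_monotone {n : ℕ} (M : EpiOpModel n) (o₀ o₁ : Fin n → ℝ)
    (h₀ : ∀ i, o₀ i ∈ Set.Icc (-(1/2) : ℝ) (1/2))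
    (h₁ : ∀ i, o₁ i ∈ Set.Icc (-(1/2) : ℝ) (1/2)) :
    ((∀ i, o₀ i ≤ o₁ i) → M.Rnum o₁ ≤ M.Rnum o₀) ∧
    ((∀ i, o₁ i ≤ o₀ i) → M.Rnum o₀ ≤ M.Rnum o₁) :=
  ⟨M.Rnum_le_Rnum_of_le (fun i => (h₀ i).1) (fun i => (h₁ i).2),
    M.Rnum_le_Rnum_of_le (fun i => (h₁ i).1) (fun i => (h₀ i).2)⟩
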